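/- Let g ∈ H^{3/2}(ℝ³) (i.e., ∫(1+|ξ|)³|ĝ(ξ)|² dξ < ∞). Then the integral ∬ |ĝ(ξ)||ĝ(ξ')| (|ξ||ξ'| + |ξ| + |ξ'| + 1) / |ξ − ξ'|² dξ dξ' is finite. -/

import Mathlib

open Real MeasureTheory

noncomputable def physFourier (g : EuclideanSpace ℝ (Fin 3) → ℂ)
    (ξ : EuclideanSpace ℝ (Fin 3)) : ℂ :=
  (2 * Real.pi : ℂ) ^ (-(3 : ℂ) / 2) *
    ∫ x : EuclideanSpace ℝ (Fin 3),
      Complex.exp (-Complex.I * (inner ℝ ξ x : ℝ)) * g x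

open Set Metric
open scoped ENNReal

local notation "E3" => EuclideanSpace ℝ (Fin 3)

lemma physFourier_stronglyMeasurable (g : E3 → ℂ) :
    StronglyMeasurable (physFourier g) := by
  by_cases hgm : AEStronglyMeasurable g volume
  · obtain ⟨G, hG, hgG⟩ := hgm
    have key : physFourier g = fun ξ => (2 * Real.pi : ℂ) ^ (-(3 : ℂ) / 2) *
        ∫ x : E3, Complex.exp (-Complex.I * (inner ℝ ξ x : ℝ)) * G x := by
      funext ξ
      unfold physFourier
      congr 1
      refine integral_congr_ae ?_
      filter_upwards [hgG] with x hx using by rw [hx]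
    rw [key]
    refine StronglyMeasurable.const_mul ?_ _
    refine StronglyMeasurable.integral_prod_right'
      (f := fun p : E3 × E3 => Complex.exp (-Complex.I * (inner ℝ p.1 p.2 : ℝ)) * G p.2) ?_
    refine StronglyMeasurable.mul ?_ (hG.comp_measurable measurable_snd)
    exact (Complex.continuous_exp.comp
      (continuous_const.mul (Complex.continuous_ofReal.comp continuous_inner))).stronglyMeasurable
  · have hni : ∀ ξ : E3, ¬ Integrable (fun x : E3 =>
        Complex.exp (-Complex.I * (inner ℝ ξ x : ℝ)) * g x) := by
      intro ξ h
      apply hgm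
      have hg2 : g = fun x : E3 => Complex.exp (Complex.I * (inner ℝ ξ x : ℝ)) *
          (Complex.exp (-Complex.I * (inner ℝ ξ x : ℝ)) * g x) := by
        funext x
        have h0 : Complex.I * ((inner ℝ ξ x : ℝ) : ℂ) + -Complex.I * ((inner ℝ ξ x : ℝ) : ℂ) = 0 := by
          ring
        rw [← mul_assoc, ← Complex.exp_add, h0, Complex.exp_zero, one_mul]
      rw [hg2]
      exact ((Complex.continuous_exp.comp (continuous_const.mul
        (Complex.continuous_ofReal.comp (Continuous.inner continuous_const
          continuous_id)))).aestronglyMeasurable).mul h.aestronglyMeasurable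
    have key : physFourier g = fun _ => 0 := by
      funext ξ
      unfold physFourier
      rw [integral_undef (hni ξ), mul_zero]
    rw [key]
    exact stronglyMeasurable_const

noncomputable def Sconst : ℝ≥0∞ := (volume : Measure E3).toSphere Set.univ

lemma Sconst_ne_top : Sconst ≠ ⊤ := measure_ne_top _ _

lemma lintegral_norm_radial (f : ℝ → ℝ≥0∞) (hf : Measurable f) :
    ∫⁻ x : E3, f ‖x‖ = Sconst * ∫⁻ y in Set.Ioi (0 : ℝ), ENNReal.ofReal (y ^ 2) * f y := by
  have hmp := (volume : Measure E3).measurePreserving_homeomorphUnitSphereProd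
  have hdim : Module.finrank ℝ E3 = 3 := by simp
  rw [hdim] at hmp
  norm_num at hmp
  have hmeas : Measurable fun p : sphere (0:E3) 1 × Set.Ioi (0:ℝ) => f p.2 :=
    hf.comp (measurable_subtype_coe.comp measurable_snd)
  have h1 : Measurable fun r : Set.Ioi (0:ℝ) => ENNReal.ofReal ((r:ℝ) ^ 2) :=
    (measurable_subtype_coe.pow_const 2).ennreal_ofReal
  have h2 : Measurable fun r : Set.Ioi (0:ℝ) => f r := hf.comp measurable_subtype_coe
  calc ∫⁻ x : E3, f ‖x‖ = ∫⁻ x in ({(0:E3)}ᶜ), f ‖x‖ := by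
        rw [restrict_compl_singleton]
    _ = ∫⁻ x : ({(0:E3)}ᶜ : Set E3), f ‖(x : E3)‖ ∂((volume : Measure E3).comap Subtype.val) :=
        (lintegral_subtype_comap ((measurableSet_singleton _).compl) (fun x : E3 => f ‖x‖)).symm
    _ = ∫⁻ p : sphere (0:E3) 1 × Set.Ioi (0:ℝ), f p.2
          ∂((volume : Measure E3).toSphere.prod (Measure.volumeIoiPow 2)) := by
        rw [← hmp.lintegral_comp hmeas]
        simp
    _ = Sconst * ∫⁻ r : Set.Ioi (0:ℝ), f r ∂(Measure.volumeIoiPow 2) := by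
        rw [lintegral_prod _ hmeas.aemeasurable]
        simp only []
        rw [lintegral_const, mul_comm]
        rfl
    _ = Sconst * ∫⁻ r : Set.Ioi (0:ℝ), ENNReal.ofReal ((r:ℝ) ^ 2) * f r
          ∂((volume : Measure ℝ).comap Subtype.val) := by
        rw [Measure.volumeIoiPow, lintegral_withDensity_eq_lintegral_mul _ h1 h2]
        rfl
    _ = Sconst * ∫⁻ y in Set.Ioi (0 : ℝ), ENNReal.ofReal (y ^ 2) * f y := by
        rw [lintegral_subtype_comap measurableSet_Ioi (fun y => ENNReal.ofReal (y ^ 2) * f y)]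

lemma lintegral_ball_inv_sq (R : ℝ) :
    ∫⁻ y : E3, (Metric.ball (0:E3) R).indicator
      (fun y : E3 => ENNReal.ofReal ((‖y‖⁻¹) ^ 2)) y ≤ Sconst * ENNReal.ofReal R := by
  have hre : ∀ y : E3, (Metric.ball (0:E3) R).indicator
      (fun y : E3 => ENNReal.ofReal ((‖y‖⁻¹) ^ 2)) y
      = ((Set.Iio R).indicator fun t : ℝ => ENNReal.ofReal ((t⁻¹) ^ 2)) ‖y‖ := by
    intro y
    by_cases h : ‖y‖ < R <;>
      simp [Set.indicator, Metric.mem_ball, dist_zero_right, Set.mem_Iio, h]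
  simp_rw [hre]
  rw [lintegral_norm_radial _ (Measurable.indicator
    ((measurable_inv.pow_const 2).ennreal_ofReal) measurableSet_Iio)]
  have key : ∫⁻ y in Set.Ioi (0:ℝ), ENNReal.ofReal (y ^ 2) *
      ((Set.Iio R).indicator fun t : ℝ => ENNReal.ofReal ((t⁻¹) ^ 2)) y ≤ ENNReal.ofReal R := by
    have hre2 : ∀ y : ℝ, ENNReal.ofReal (y ^ 2) *
        ((Set.Iio R).indicator fun t : ℝ => ENNReal.ofReal ((t⁻¹) ^ 2)) y
        = (Set.Iio R).indicator (fun t : ℝ => ENNReal.ofReal (t ^ 2) * ENNReal.ofReal ((t⁻¹) ^ 2)) y := by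
      intro y
      by_cases h : y ∈ Set.Iio R <;> simp [h]
    simp_rw [hre2]
    rw [lintegral_indicator measurableSet_Iio]
    rw [Measure.restrict_restrict measurableSet_Iio]
    have hset : Set.Iio R ∩ Set.Ioi 0 = Set.Ioo 0 R := by
      ext t; simp [Set.mem_Ioo, and_comm]
    rw [hset]
    have : ∫⁻ t in Set.Ioo (0:ℝ) R, ENNReal.ofReal (t ^ 2) * ENNReal.ofReal ((t⁻¹) ^ 2)
        = ∫⁻ _ in Set.Ioo (0:ℝ) R, 1 := by
      refine setLIntegral_congr_fun measurableSet_Ioo (fun t ht => ?_)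
      rw [← ENNReal.ofReal_mul (sq_nonneg _)]
      have ht0 : t ≠ 0 := ne_of_gt ht.1
      have : t ^ 2 * (t⁻¹) ^ 2 = 1 := by field_simp
      rw [this, ENNReal.ofReal_one]
    rw [this, setLIntegral_one, Real.volume_Ioo, sub_zero]
  calc Sconst * _ ≤ Sconst * ENNReal.ofReal R := mul_le_mul_right key _

lemma lintegral_tail_inv_four (R : ℝ) (hR : 0 < R) :
    ∫⁻ y : E3, ({y : E3 | R ≤ ‖y‖}).indicator
      (fun y : E3 => ENNReal.ofReal ((‖y‖⁻¹) ^ 4)) y ≤ Sconst * ENNReal.ofReal R⁻¹ := by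
  have hre : ∀ y : E3, ({y : E3 | R ≤ ‖y‖}).indicator
      (fun y : E3 => ENNReal.ofReal ((‖y‖⁻¹) ^ 4)) y
      = ((Set.Ici R).indicator fun t : ℝ => ENNReal.ofReal ((t⁻¹) ^ 4)) ‖y‖ := by
    intro y
    by_cases h : R ≤ ‖y‖ <;> simp [Set.indicator, Set.mem_Ici, h]
  simp_rw [hre]
  rw [lintegral_norm_radial _ (Measurable.indicator
    ((measurable_inv.pow_const 4).ennreal_ofReal) measurableSet_Ici)]
  have key : ∫⁻ y in Set.Ioi (0:ℝ), ENNReal.ofReal (y ^ 2) *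
      ((Set.Ici R).indicator fun t : ℝ => ENNReal.ofReal ((t⁻¹) ^ 4)) y
      ≤ ENNReal.ofReal R⁻¹ := by
    have hre2 : ∀ y : ℝ, ENNReal.ofReal (y ^ 2) *
        ((Set.Ici R).indicator fun t : ℝ => ENNReal.ofReal ((t⁻¹) ^ 4)) y
        = (Set.Ici R).indicator
            (fun t : ℝ => ENNReal.ofReal (t ^ 2) * ENNReal.ofReal ((t⁻¹) ^ 4)) y := by
      intro y
      by_cases h : y ∈ Set.Ici R <;> simp [h]
    simp_rw [hre2]
    rw [lintegral_indicator measurableSet_Ici, Measure.restrict_restrict measurableSet_Ici]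
    have hset : Set.Ici R ∩ Set.Ioi 0 = Set.Ici R := by
      refine Set.inter_eq_left.2 fun t ht => lt_of_lt_of_le hR ht
    rw [hset]
    have hIoi : ∫⁻ t in Set.Ici R, ENNReal.ofReal (t ^ 2) * ENNReal.ofReal ((t⁻¹) ^ 4)
        = ∫⁻ t in Set.Ioi R, ENNReal.ofReal (t ^ 2) * ENNReal.ofReal ((t⁻¹) ^ 4) :=
      (setLIntegral_congr (Ioi_ae_eq_Ici (μ := volume) (a := R))).symm
    rw [hIoi]
    have hcong : ∫⁻ t in Set.Ioi R, ENNReal.ofReal (t ^ 2) * ENNReal.ofReal ((t⁻¹) ^ 4)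
        = ∫⁻ t in Set.Ioi R, ENNReal.ofReal (t ^ (-2 : ℝ)) := by
      refine setLIntegral_congr_fun measurableSet_Ioi (fun t ht => ?_)
      have ht0 : 0 < t := lt_trans hR ht
      rw [← ENNReal.ofReal_mul (sq_nonneg _)]
      congr 1
      have h2 : t ^ (-2 : ℝ) = (t ^ 2)⁻¹ := by
        rw [show (-2 : ℝ) = -((2 : ℕ) : ℝ) by norm_num, Real.rpow_neg ht0.le,
          Real.rpow_natCast]
      rw [h2]
      field_simp
    rw [hcong]
    have hint : IntegrableOn (fun t : ℝ => t ^ (-2 : ℝ)) (Set.Ioi R) :=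
      integrableOn_Ioi_rpow_of_lt (by norm_num) hR
    have hnn : 0 ≤ᵐ[volume.restrict (Set.Ioi R)] fun t : ℝ => t ^ (-2 : ℝ) := by
      filter_upwards [ae_restrict_mem measurableSet_Ioi] with t ht
      exact Real.rpow_nonneg (le_of_lt (lt_trans hR ht)) _
    rw [← ofReal_integral_eq_lintegral_ofReal hint hnn]
    refine ENNReal.ofReal_le_ofReal ?_
    rw [integral_Ioi_rpow_of_lt (by norm_num) hR]
    norm_num
    rw [Real.rpow_neg_one]
  calc Sconst * _ ≤ Sconst * ENNReal.ofReal R⁻¹ := mul_le_mul_right key _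

lemma lintegral_ball_center (ξ : E3) (R : ℝ) :
    ∫⁻ η : E3, (Metric.ball ξ R).indicator
      (fun η : E3 => ENNReal.ofReal ((‖ξ - η‖⁻¹) ^ 2)) η ≤ Sconst * ENNReal.ofReal R := by
  have hmp : MeasurePreserving (fun η : E3 => ξ - η) volume volume :=
    Measure.measurePreserving_sub_left volume ξ
  have hre : (fun η : E3 => (Metric.ball ξ R).indicator
      (fun η : E3 => ENNReal.ofReal ((‖ξ - η‖⁻¹) ^ 2)) η)
      = fun η : E3 => ((Metric.ball (0:E3) R).indicator
          (fun y : E3 => ENNReal.ofReal ((‖y‖⁻¹) ^ 2))) (ξ - η) := by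
    funext η
    have hmem : η ∈ Metric.ball ξ R ↔ ξ - η ∈ Metric.ball (0:E3) R := by
      rw [Metric.mem_ball, Metric.mem_ball, dist_zero_right, dist_eq_norm, norm_sub_rev]
    by_cases h : η ∈ Metric.ball ξ R
    · rw [Set.indicator_of_mem h, Set.indicator_of_mem (hmem.1 h)]
    · rw [Set.indicator_of_notMem h, Set.indicator_of_notMem (fun hc => h (hmem.2 hc))]
  rw [hre, hmp.lintegral_comp (show Measurable ((Metric.ball (0:E3) R).indicator
    (fun y : E3 => ENNReal.ofReal ((‖y‖⁻¹) ^ 2))) from Measurable.indicator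
    ((measurable_norm.inv.pow_const 2).ennreal_ofReal) measurableSet_ball)]
  exact lintegral_ball_inv_sq R

lemma kernel_lintegral_bound (ξ : E3) :
    ∫⁻ η : E3, ENNReal.ofReal ((((1 : ℝ) + ‖η‖)⁻¹) ^ 2 * ((‖ξ - η‖)⁻¹) ^ 2)
      ≤ (12 : ℝ≥0∞) * Sconst * ENNReal.ofReal (((1 : ℝ) + ‖ξ‖)⁻¹) := by
  set w : ℝ := 1 + ‖ξ‖ with hw
  have hw1 : (1 : ℝ) ≤ w := le_add_of_nonneg_right (norm_nonneg _)
  have hw0 : (0 : ℝ) < w := lt_of_lt_of_le one_pos hw1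
  -- the three majorants
  set T1 : E3 → ℝ≥0∞ := fun η => (Metric.ball ξ (w / 2)).indicator
    (fun η : E3 => ENNReal.ofReal ((4 * (w⁻¹) ^ 2) * ((‖ξ - η‖⁻¹) ^ 2))) η with hT1
  set T2 : E3 → ℝ≥0∞ := fun η => (Metric.ball (0:E3) (2 * w)).indicator
    (fun η : E3 => ENNReal.ofReal ((4 * (w⁻¹) ^ 2) * ((((1:ℝ) + ‖η‖)⁻¹) ^ 2))) η with hT2
  set T3 : E3 → ℝ≥0∞ := fun η => ({η : E3 | 2 * w ≤ ‖η‖}).indicator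
    (fun η : E3 => ENNReal.ofReal (4 * ((‖η‖⁻¹) ^ 4))) η with hT3
  have hpt : ∀ η : E3, ENNReal.ofReal ((((1 : ℝ) + ‖η‖)⁻¹) ^ 2 * ((‖ξ - η‖)⁻¹) ^ 2)
      ≤ T1 η + T2 η + T3 η := by
    intro η
    by_cases h1 : η ∈ Metric.ball ξ (w / 2)
    · have hd : ‖ξ - η‖ < w / 2 := by
        rw [Metric.mem_ball, dist_eq_norm] at h1; rwa [norm_sub_rev]
      have hη : w / 2 ≤ 1 + ‖η‖ := by
        have := norm_sub_norm_le ξ η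
        have h2 : ‖ξ‖ - ‖η‖ ≤ ‖ξ - η‖ := this
        simp only [hw]; linarith
      have hle : (((1 : ℝ) + ‖η‖)⁻¹) ^ 2 ≤ 4 * (w⁻¹) ^ 2 := by
        have h3 : ((1 : ℝ) + ‖η‖)⁻¹ ≤ (w / 2)⁻¹ := by
          apply inv_anti₀ (by linarith) hη
        have h4 : ((w : ℝ) / 2)⁻¹ = 2 * w⁻¹ := by
          field_simp
        calc (((1 : ℝ) + ‖η‖)⁻¹) ^ 2 ≤ ((w / 2)⁻¹) ^ 2 := by
              apply pow_le_pow_left₀ (by positivity) h3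
          _ = 4 * (w⁻¹) ^ 2 := by rw [h4]; ring
      calc ENNReal.ofReal ((((1 : ℝ) + ‖η‖)⁻¹) ^ 2 * ((‖ξ - η‖)⁻¹) ^ 2)
          ≤ T1 η := by
            rw [hT1]; simp only [Set.indicator_of_mem h1]
            exact ENNReal.ofReal_le_ofReal
              (mul_le_mul_of_nonneg_right hle (by positivity))
        _ ≤ T1 η + T2 η := le_self_add
        _ ≤ T1 η + T2 η + T3 η := le_self_add
    · have hd : w / 2 ≤ ‖ξ - η‖ := by
        rw [Metric.mem_ball, dist_eq_norm, not_lt] at h1; rwa [norm_sub_rev]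
      have hdinv : ((‖ξ - η‖)⁻¹) ^ 2 ≤ 4 * (w⁻¹) ^ 2 := by
        have h3 : (‖ξ - η‖)⁻¹ ≤ (w / 2)⁻¹ := inv_anti₀ (by linarith) hd
        have h4 : ((w : ℝ) / 2)⁻¹ = 2 * w⁻¹ := by field_simp
        calc ((‖ξ - η‖)⁻¹) ^ 2 ≤ ((w / 2)⁻¹) ^ 2 := by
              apply pow_le_pow_left₀ (by positivity) h3
          _ = 4 * (w⁻¹) ^ 2 := by rw [h4]; ring
      by_cases h2 : η ∈ Metric.ball (0:E3) (2 * w)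
      · calc ENNReal.ofReal ((((1 : ℝ) + ‖η‖)⁻¹) ^ 2 * ((‖ξ - η‖)⁻¹) ^ 2)
            ≤ T2 η := by
              rw [hT2]; simp only [Set.indicator_of_mem h2]
              refine ENNReal.ofReal_le_ofReal ?_
              calc (((1 : ℝ) + ‖η‖)⁻¹) ^ 2 * ((‖ξ - η‖)⁻¹) ^ 2
                  ≤ (((1 : ℝ) + ‖η‖)⁻¹) ^ 2 * (4 * (w⁻¹) ^ 2) :=
                    mul_le_mul_of_nonneg_left hdinv (by positivity)
                _ = 4 * (w⁻¹) ^ 2 * ((((1:ℝ) + ‖η‖)⁻¹) ^ 2) := by ring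
          _ ≤ T1 η + T2 η := le_add_self
          _ ≤ T1 η + T2 η + T3 η := le_self_add
      · have hη : 2 * w ≤ ‖η‖ := by
          rw [Metric.mem_ball, dist_zero_right, not_lt] at h2; exact h2
        have hη0 : (0 : ℝ) < ‖η‖ := lt_of_lt_of_le (by linarith) hη
        have hd2 : ‖η‖ / 2 ≤ ‖ξ - η‖ := by
          have h5 : ‖η‖ - ‖ξ‖ ≤ ‖ξ - η‖ := by
            rw [norm_sub_rev]; exact norm_sub_norm_le η ξ
          have h6 : ‖ξ‖ ≤ w := by simp only [hw]; linarith
          linarith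
        have hb1 : (((1 : ℝ) + ‖η‖)⁻¹) ^ 2 ≤ (‖η‖⁻¹) ^ 2 := by
          apply pow_le_pow_left₀ (by positivity)
          exact inv_anti₀ hη0 (by linarith)
        have hb2 : ((‖ξ - η‖)⁻¹) ^ 2 ≤ 4 * (‖η‖⁻¹) ^ 2 := by
          have h3 : (‖ξ - η‖)⁻¹ ≤ (‖η‖ / 2)⁻¹ := inv_anti₀ (by positivity) hd2
          have h4 : ((‖η‖ : ℝ) / 2)⁻¹ = 2 * ‖η‖⁻¹ := by field_simp
          calc ((‖ξ - η‖)⁻¹) ^ 2 ≤ ((‖η‖ / 2)⁻¹) ^ 2 := by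
                apply pow_le_pow_left₀ (by positivity) h3
            _ = 4 * (‖η‖⁻¹) ^ 2 := by rw [h4]; ring
        calc ENNReal.ofReal ((((1 : ℝ) + ‖η‖)⁻¹) ^ 2 * ((‖ξ - η‖)⁻¹) ^ 2)
            ≤ T3 η := by
              have hmem3 : η ∈ {η : E3 | 2 * w ≤ ‖η‖} := hη
              rw [hT3]; simp only [Set.indicator_of_mem hmem3]
              refine ENNReal.ofReal_le_ofReal ?_
              calc (((1 : ℝ) + ‖η‖)⁻¹) ^ 2 * ((‖ξ - η‖)⁻¹) ^ 2
                  ≤ (‖η‖⁻¹) ^ 2 * (4 * (‖η‖⁻¹) ^ 2) :=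
                    mul_le_mul hb1 hb2 (by positivity) (by positivity)
                _ = 4 * ((‖η‖⁻¹) ^ 4) := by ring
          _ ≤ T1 η + T2 η + T3 η := le_add_self
  have hc0 : (0:ℝ) ≤ 4 * (w⁻¹) ^ 2 := by positivity
  have mK1 : Measurable fun η : E3 => ENNReal.ofReal ((‖ξ - η‖⁻¹) ^ 2) :=
    (((measurable_const.sub measurable_id).norm.inv.pow_const 2)).ennreal_ofReal
  have mK2 : Measurable fun η : E3 => ENNReal.ofReal ((((1:ℝ) + ‖η‖)⁻¹) ^ 2) :=
    (((measurable_const.add measurable_norm).inv.pow_const 2)).ennreal_ofReal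
  have mK3 : Measurable fun η : E3 => ENNReal.ofReal ((‖η‖⁻¹) ^ 4) :=
    ((measurable_norm.inv.pow_const 4)).ennreal_ofReal
  have mT1 : Measurable T1 := Measurable.indicator (by fun_prop) measurableSet_ball
  have mT2 : Measurable T2 := Measurable.indicator (by fun_prop) measurableSet_ball
  have mT3 : Measurable T3 := Measurable.indicator (by fun_prop)
    (measurableSet_le measurable_const measurable_norm)
  -- bound for T1
  have hB1 : ∫⁻ η, T1 η ≤ ENNReal.ofReal (4 * (w⁻¹) ^ 2) * (Sconst * ENNReal.ofReal (w / 2)) := by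
    have hT1' : ∀ η, T1 η = ENNReal.ofReal (4 * (w⁻¹) ^ 2) *
        (Metric.ball ξ (w / 2)).indicator
          (fun η : E3 => ENNReal.ofReal ((‖ξ - η‖⁻¹) ^ 2)) η := by
      intro η
      by_cases h : η ∈ Metric.ball ξ (w / 2)
      · rw [hT1]
        simp only [Set.indicator_of_mem h]
        rw [ENNReal.ofReal_mul hc0]
      · rw [hT1]
        simp only [Set.indicator_of_notMem h, mul_zero]
    simp_rw [hT1']
    rw [lintegral_const_mul _ (mK1.indicator measurableSet_ball)]
    exact mul_le_mul_right (lintegral_ball_center ξ (w / 2)) _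
  -- bound for T2
  have hB2 : ∫⁻ η, T2 η ≤ ENNReal.ofReal (4 * (w⁻¹) ^ 2) *
      (Sconst * ENNReal.ofReal (2 * w)) := by
    have h0 : ∀ᵐ η : E3, η ≠ (0 : E3) := by
      refine ae_iff.2 ?_
      simpa using measure_singleton (0 : E3)
    have h2ae : T2 ≤ᵐ[volume] fun η : E3 => ENNReal.ofReal (4 * (w⁻¹) ^ 2) *
        (Metric.ball (0:E3) (2 * w)).indicator
          (fun η : E3 => ENNReal.ofReal ((‖η‖⁻¹) ^ 2)) η := by
      filter_upwards [h0] with η hη0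
      by_cases h : η ∈ Metric.ball (0:E3) (2 * w)
      · simp only [hT2, Set.indicator_of_mem h]
        rw [ENNReal.ofReal_mul hc0]
        refine mul_le_mul_right (ENNReal.ofReal_le_ofReal ?_) _
        have hpos : (0:ℝ) < ‖η‖ := norm_pos_iff.2 hη0
        exact pow_le_pow_left₀ (by positivity) (inv_anti₀ hpos (by linarith)) 2
      · simp [hT2, Set.indicator_of_notMem h]
    calc ∫⁻ η, T2 η ≤ ∫⁻ η, ENNReal.ofReal (4 * (w⁻¹) ^ 2) *
          (Metric.ball (0:E3) (2 * w)).indicator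
            (fun η : E3 => ENNReal.ofReal ((‖η‖⁻¹) ^ 2)) η := lintegral_mono_ae h2ae
      _ = ENNReal.ofReal (4 * (w⁻¹) ^ 2) * ∫⁻ η, (Metric.ball (0:E3) (2 * w)).indicator
            (fun η : E3 => ENNReal.ofReal ((‖η‖⁻¹) ^ 2)) η :=
          lintegral_const_mul _ ((((measurable_norm.inv.pow_const 2)).ennreal_ofReal).indicator measurableSet_ball)
      _ ≤ ENNReal.ofReal (4 * (w⁻¹) ^ 2) * (Sconst * ENNReal.ofReal (2 * w)) :=
          mul_le_mul_right (lintegral_ball_inv_sq (2 * w)) _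
  -- bound for T3
  have hB3 : ∫⁻ η, T3 η ≤ ENNReal.ofReal 4 * (Sconst * ENNReal.ofReal ((2 * w)⁻¹)) := by
    have hT3' : ∀ η, T3 η = ENNReal.ofReal 4 *
        ({η : E3 | 2 * w ≤ ‖η‖}).indicator
          (fun η : E3 => ENNReal.ofReal ((‖η‖⁻¹) ^ 4)) η := by
      intro η
      by_cases h : η ∈ {η : E3 | 2 * w ≤ ‖η‖}
      · rw [hT3]
        simp only [Set.indicator_of_mem h]
        rw [ENNReal.ofReal_mul (by norm_num : (0:ℝ) ≤ 4)]
      · rw [hT3]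
        simp only [Set.indicator_of_notMem h, mul_zero]
    simp_rw [hT3']
    rw [lintegral_const_mul _ (mK3.indicator
      (measurableSet_le measurable_const measurable_norm))]
    exact mul_le_mul_right (lintegral_tail_inv_four (2 * w) (by linarith)) _
  have r1 : 4 * (w⁻¹) ^ 2 * (w / 2) = 2 * w⁻¹ := by field_simp; ring
  have r2 : 4 * (w⁻¹) ^ 2 * (2 * w) = 8 * w⁻¹ := by field_simp; ring
  have r3 : 4 * (2 * w)⁻¹ = 2 * w⁻¹ := by field_simp; ring
  calc ∫⁻ η : E3, ENNReal.ofReal ((((1 : ℝ) + ‖η‖)⁻¹) ^ 2 * ((‖ξ - η‖)⁻¹) ^ 2)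
      ≤ ∫⁻ η, (T1 η + T2 η + T3 η) := lintegral_mono hpt
    _ = (∫⁻ η, T1 η + T2 η) + ∫⁻ η, T3 η := lintegral_add_right _ mT3
    _ = ((∫⁻ η, T1 η) + ∫⁻ η, T2 η) + ∫⁻ η, T3 η := by rw [lintegral_add_right _ mT2]
    _ ≤ ENNReal.ofReal (4 * (w⁻¹) ^ 2) * (Sconst * ENNReal.ofReal (w / 2))
        + ENNReal.ofReal (4 * (w⁻¹) ^ 2) * (Sconst * ENNReal.ofReal (2 * w))
        + ENNReal.ofReal 4 * (Sconst * ENNReal.ofReal ((2 * w)⁻¹)) :=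
        add_le_add (add_le_add hB1 hB2) hB3
    _ = Sconst * ENNReal.ofReal (2 * w⁻¹) + Sconst * ENNReal.ofReal (8 * w⁻¹)
        + Sconst * ENNReal.ofReal (2 * w⁻¹) := by
        have e1 : ENNReal.ofReal (4 * (w⁻¹) ^ 2) * (Sconst * ENNReal.ofReal (w / 2))
            = Sconst * ENNReal.ofReal (2 * w⁻¹) := by
          rw [show ∀ A S B : ℝ≥0∞, A * (S * B) = S * (A * B) from fun A S B => by ring,
            ← ENNReal.ofReal_mul hc0, r1]
        have e2 : ENNReal.ofReal (4 * (w⁻¹) ^ 2) * (Sconst * ENNReal.ofReal (2 * w))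
            = Sconst * ENNReal.ofReal (8 * w⁻¹) := by
          rw [show ∀ A S B : ℝ≥0∞, A * (S * B) = S * (A * B) from fun A S B => by ring,
            ← ENNReal.ofReal_mul hc0, r2]
        have e3 : ENNReal.ofReal 4 * (Sconst * ENNReal.ofReal ((2 * w)⁻¹))
            = Sconst * ENNReal.ofReal (2 * w⁻¹) := by
          rw [show ∀ A S B : ℝ≥0∞, A * (S * B) = S * (A * B) from fun A S B => by ring,
            ← ENNReal.ofReal_mul (by norm_num : (0:ℝ) ≤ 4), r3]
        rw [e1, e2, e3]
    _ = (12 : ℝ≥0∞) * Sconst * ENNReal.ofReal (((1 : ℝ) + ‖ξ‖)⁻¹) := by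
        rw [← mul_add, ← mul_add,
          ← ENNReal.ofReal_add (by positivity) (by positivity),
          ← ENNReal.ofReal_add (by positivity) (by positivity)]
        have h12 : 2 * w⁻¹ + 8 * w⁻¹ + 2 * w⁻¹ = 12 * w⁻¹ := by ring
        rw [h12, ENNReal.ofReal_mul (by norm_num : (0:ℝ) ≤ 12),
          show ENNReal.ofReal (12:ℝ) = (12:ℝ≥0∞) by norm_num, ← hw]
        ring

lemma main_pointwise (a b w1 w2 e : ℝ) (ha : 0 ≤ a) (hb : 0 ≤ b)
    (h1 : 0 < w1) (h2 : 0 < w2) (he : 0 ≤ e) :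
    a * b * (w1 * w2) * e ≤
      w1 ^ 2 * (w1 * a) ^ 2 * ((w2⁻¹) ^ 2 * e) + w2 ^ 2 * (w2 * b) ^ 2 * ((w1⁻¹) ^ 2 * e) := by
  set X : ℝ := w1 ^ 2 * a * w2⁻¹ with hX
  set Y : ℝ := w2 ^ 2 * b * w1⁻¹ with hY
  have hX0 : 0 ≤ X := by positivity
  have hY0 : 0 ≤ Y := by positivity
  have hXY : X * Y = a * b * (w1 * w2) := by
    rw [hX, hY]; field_simp
  have h5 : X * Y ≤ X ^ 2 + Y ^ 2 := by nlinarith [sq_nonneg (X - Y), mul_nonneg hX0 hY0]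
  calc a * b * (w1 * w2) * e = (X * Y) * e := by rw [hXY]
    _ ≤ (X ^ 2 + Y ^ 2) * e := mul_le_mul_of_nonneg_right h5 he
    _ = w1 ^ 2 * (w1 * a) ^ 2 * ((w2⁻¹) ^ 2 * e) + w2 ^ 2 * (w2 * b) ^ 2 * ((w1⁻¹) ^ 2 * e) := by
        rw [hX, hY]; ring

theorem momentum_kernel_integrable
    (g : EuclideanSpace ℝ (Fin 3) → ℂ)
    (hg : Integrable (fun ξ : EuclideanSpace ℝ (Fin 3) =>
      (1 + ‖ξ‖) ^ 3 * ‖physFourier g ξ‖ ^ 2)) :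
    Integrable (fun q : EuclideanSpace ℝ (Fin 3) × EuclideanSpace ℝ (Fin 3) =>
      ‖physFourier g q.1‖ * ‖physFourier g q.2‖ *
        (‖q.1‖ * ‖q.2‖ + ‖q.1‖ + ‖q.2‖ + 1) / ‖q.1 - q.2‖ ^ 2) := by
  have hF : Measurable fun ξ : E3 => ‖physFourier g ξ‖ :=
    (physFourier_stronglyMeasurable g).measurable.norm
  set F : E3 → ℝ := fun ξ => ‖physFourier g ξ‖ with hFdef
  have hF0 : ∀ ξ, 0 ≤ F ξ := fun ξ => norm_nonneg _
  set f : E3 × E3 → ℝ := fun q =>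
    F q.1 * F q.2 * (‖q.1‖ * ‖q.2‖ + ‖q.1‖ + ‖q.2‖ + 1) / ‖q.1 - q.2‖ ^ 2 with hfdef
  have hf0 : ∀ q, 0 ≤ f q := by
    intro q
    have h1 : (0:ℝ) ≤ ‖q.1‖ * ‖q.2‖ + ‖q.1‖ + ‖q.2‖ + 1 := by positivity
    exact div_nonneg (by positivity) (by positivity)
  -- measurability of f
  have hmf : Measurable f := by
    apply Measurable.div
    · exact ((hF.comp measurable_fst).mul (hF.comp measurable_snd)).mul
        ((((measurable_fst.norm.mul measurable_snd.norm).add measurable_fst.norm).add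
          measurable_snd.norm).add measurable_const)
    · exact (measurable_fst.sub measurable_snd).norm.pow_const 2
  -- the two majorants
  set C : E3 → ℝ≥0∞ := fun ξ =>
    ENNReal.ofReal ((1 + ‖ξ‖) ^ 2 * ((1 + ‖ξ‖) * F ξ) ^ 2) with hCdef
  have hmC : Measurable C :=
    (((measurable_const.add measurable_norm).pow_const 2).mul
      (((measurable_const.add measurable_norm).mul hF).pow_const 2)).ennreal_ofReal
  set P : E3 × E3 → ℝ≥0∞ := fun q => C q.1 *
    ENNReal.ofReal ((((1:ℝ) + ‖q.2‖)⁻¹) ^ 2 * ((‖q.1 - q.2‖)⁻¹) ^ 2) with hPdef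
  set Q : E3 × E3 → ℝ≥0∞ := fun q => C q.2 *
    ENNReal.ofReal ((((1:ℝ) + ‖q.1‖)⁻¹) ^ 2 * ((‖q.1 - q.2‖)⁻¹) ^ 2) with hQdef
  have hmker : Measurable fun q : E3 × E3 =>
      ENNReal.ofReal ((((1:ℝ) + ‖q.2‖)⁻¹) ^ 2 * ((‖q.1 - q.2‖)⁻¹) ^ 2) :=
    (((measurable_const.add measurable_snd.norm).inv.pow_const 2).mul
      ((measurable_fst.sub measurable_snd).norm.inv.pow_const 2)).ennreal_ofReal
  have hmker' : Measurable fun q : E3 × E3 =>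
      ENNReal.ofReal ((((1:ℝ) + ‖q.1‖)⁻¹) ^ 2 * ((‖q.1 - q.2‖)⁻¹) ^ 2) :=
    (((measurable_const.add measurable_fst.norm).inv.pow_const 2).mul
      ((measurable_fst.sub measurable_snd).norm.inv.pow_const 2)).ennreal_ofReal
  have hmP : Measurable P := (hmC.comp measurable_fst).mul hmker
  have hmQ : Measurable Q := (hmC.comp measurable_snd).mul hmker'
  -- pointwise bound
  have hpt : ∀ q : E3 × E3, ENNReal.ofReal (f q) ≤ P q + Q q := by
    intro ⟨ξ, η⟩
    have hw1 : (0:ℝ) < 1 + ‖ξ‖ := by positivity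
    have hw2 : (0:ℝ) < 1 + ‖η‖ := by positivity
    have hP : P (ξ, η) = ENNReal.ofReal ((1 + ‖ξ‖) ^ 2 * ((1 + ‖ξ‖) * F ξ) ^ 2 *
        ((((1:ℝ) + ‖η‖)⁻¹) ^ 2 * ((‖ξ - η‖)⁻¹) ^ 2)) := by
      rw [hPdef]
      try simp only []
      rw [hCdef]
      try simp only []
      rw [← ENNReal.ofReal_mul (by positivity)]
    have hQ : Q (ξ, η) = ENNReal.ofReal ((1 + ‖η‖) ^ 2 * ((1 + ‖η‖) * F η) ^ 2 *
        ((((1:ℝ) + ‖ξ‖)⁻¹) ^ 2 * ((‖ξ - η‖)⁻¹) ^ 2)) := by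
      rw [hQdef]
      try simp only []
      rw [hCdef]
      try simp only []
      rw [← ENNReal.ofReal_mul (by positivity)]
    rw [hP, hQ, ← ENNReal.ofReal_add (by positivity) (by positivity)]
    refine ENNReal.ofReal_le_ofReal ?_
    have heq : f (ξ, η) = F ξ * F η * ((1 + ‖ξ‖) * (1 + ‖η‖)) * ((‖ξ - η‖ ^ 2)⁻¹) := by
      rw [hfdef]
      try simp only []
      rw [div_eq_mul_inv]
      ring_nf
    rw [heq]
    have hinv : (‖ξ - η‖ ^ 2)⁻¹ = ((‖ξ - η‖)⁻¹) ^ 2 := by rw [inv_pow]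
    rw [hinv]
    have := main_pointwise (F ξ) (F η) (1 + ‖ξ‖) (1 + ‖η‖) (((‖ξ - η‖)⁻¹) ^ 2)
      (hF0 ξ) (hF0 η) hw1 hw2 (by positivity)
    calc F ξ * F η * ((1 + ‖ξ‖) * (1 + ‖η‖)) * ((‖ξ - η‖)⁻¹) ^ 2
        ≤ (1 + ‖ξ‖) ^ 2 * ((1 + ‖ξ‖) * F ξ) ^ 2 * ((((1:ℝ) + ‖η‖)⁻¹) ^ 2 * ((‖ξ - η‖)⁻¹) ^ 2)
          + (1 + ‖η‖) ^ 2 * ((1 + ‖η‖) * F η) ^ 2 *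
            ((((1:ℝ) + ‖ξ‖)⁻¹) ^ 2 * ((‖ξ - η‖)⁻¹) ^ 2) := this
      _ = _ := by ring
  -- finiteness of the hg lintegral
  have hgfin : ∫⁻ ξ : E3, ENNReal.ofReal ((1 + ‖ξ‖) ^ 3 * F ξ ^ 2) < ⊤ := by
    have h := hg.hasFiniteIntegral
    rwa [hasFiniteIntegral_iff_ofReal (ae_of_all _ fun ξ => by positivity)] at h
  have hconst_ne_top : (12 : ℝ≥0∞) * Sconst ≠ ⊤ :=
    ENNReal.mul_ne_top (by norm_num) Sconst_ne_top
  -- C ξ * ofReal((1+‖ξ‖)⁻¹) = ofReal((1+‖ξ‖)^3 F ξ^2)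
  have hCid : ∀ ξ : E3, C ξ * ENNReal.ofReal (((1:ℝ) + ‖ξ‖)⁻¹)
      = ENNReal.ofReal ((1 + ‖ξ‖) ^ 3 * F ξ ^ 2) := by
    intro ξ
    have hw : (0:ℝ) < 1 + ‖ξ‖ := by positivity
    rw [hCdef]
    try simp only []
    rw [← ENNReal.ofReal_mul (by positivity)]
    congr 1
    field_simp
  have hvol : (volume : Measure (E3 × E3)) = (volume : Measure E3).prod volume :=
    Measure.volume_eq_prod _ _
  -- bound for ∫⁻ P
  have hPfin : ∫⁻ q, P q < ⊤ := by
    rw [hvol, lintegral_prod _ hmP.aemeasurable]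
    have hinner : ∀ ξ : E3, ∫⁻ η, P (ξ, η) ≤ (12 : ℝ≥0∞) * Sconst *
        ENNReal.ofReal ((1 + ‖ξ‖) ^ 3 * F ξ ^ 2) := by
      intro ξ
      have : ∫⁻ η, P (ξ, η) = C ξ * ∫⁻ η : E3,
          ENNReal.ofReal ((((1:ℝ) + ‖η‖)⁻¹) ^ 2 * ((‖ξ - η‖)⁻¹) ^ 2) := by
        rw [← lintegral_const_mul _ (show Measurable fun η : E3 =>
          ENNReal.ofReal ((((1:ℝ) + ‖η‖)⁻¹) ^ 2 * ((‖ξ - η‖)⁻¹) ^ 2) from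
          (((((measurable_const.add measurable_norm).inv.pow_const 2)).mul
          ((measurable_const.sub measurable_id').norm.inv.pow_const 2)).ennreal_ofReal))]
      rw [this]
      calc C ξ * ∫⁻ η : E3, ENNReal.ofReal ((((1:ℝ) + ‖η‖)⁻¹) ^ 2 * ((‖ξ - η‖)⁻¹) ^ 2)
          ≤ C ξ * ((12 : ℝ≥0∞) * Sconst * ENNReal.ofReal (((1:ℝ) + ‖ξ‖)⁻¹)) :=
            mul_le_mul_right (kernel_lintegral_bound ξ) _
        _ = (12 : ℝ≥0∞) * Sconst * (C ξ * ENNReal.ofReal (((1:ℝ) + ‖ξ‖)⁻¹)) := by ring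
        _ = (12 : ℝ≥0∞) * Sconst * ENNReal.ofReal ((1 + ‖ξ‖) ^ 3 * F ξ ^ 2) := by
            rw [hCid ξ]
    calc ∫⁻ ξ, ∫⁻ η, P (ξ, η) ≤ ∫⁻ ξ : E3, (12 : ℝ≥0∞) * Sconst *
          ENNReal.ofReal ((1 + ‖ξ‖) ^ 3 * F ξ ^ 2) := lintegral_mono hinner
      _ = (12 : ℝ≥0∞) * Sconst * ∫⁻ ξ : E3, ENNReal.ofReal ((1 + ‖ξ‖) ^ 3 * F ξ ^ 2) :=
          lintegral_const_mul _ ((((measurable_const.add measurable_norm).pow_const 3).mul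
            (hF.pow_const 2)).ennreal_ofReal)
      _ < ⊤ := ENNReal.mul_lt_top hconst_ne_top.lt_top hgfin
  -- bound for ∫⁻ Q
  have hQfin : ∫⁻ q, Q q < ⊤ := by
    rw [hvol, lintegral_prod_symm _ hmQ.aemeasurable]
    have hinner : ∀ η : E3, ∫⁻ ξ, Q (ξ, η) ≤ (12 : ℝ≥0∞) * Sconst *
        ENNReal.ofReal ((1 + ‖η‖) ^ 3 * F η ^ 2) := by
      intro η
      have hrev : ∀ ξ : E3, ‖ξ - η‖ = ‖η - ξ‖ := fun ξ => norm_sub_rev _ _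
      have : ∫⁻ ξ, Q (ξ, η) = C η * ∫⁻ ξ : E3,
          ENNReal.ofReal ((((1:ℝ) + ‖ξ‖)⁻¹) ^ 2 * ((‖η - ξ‖)⁻¹) ^ 2) := by
        rw [← lintegral_const_mul _ (show Measurable fun ξ : E3 =>
          ENNReal.ofReal ((((1:ℝ) + ‖ξ‖)⁻¹) ^ 2 * ((‖η - ξ‖)⁻¹) ^ 2) from
          (((((measurable_const.add measurable_norm).inv.pow_const 2)).mul
          ((measurable_const.sub measurable_id').norm.inv.pow_const 2)).ennreal_ofReal))]
        refine lintegral_congr fun ξ => ?_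
        rw [hQdef]
        try simp only []
        rw [hrev ξ]
      rw [this]
      calc C η * ∫⁻ ξ : E3, ENNReal.ofReal ((((1:ℝ) + ‖ξ‖)⁻¹) ^ 2 * ((‖η - ξ‖)⁻¹) ^ 2)
          ≤ C η * ((12 : ℝ≥0∞) * Sconst * ENNReal.ofReal (((1:ℝ) + ‖η‖)⁻¹)) :=
            mul_le_mul_right (kernel_lintegral_bound η) _
        _ = (12 : ℝ≥0∞) * Sconst * (C η * ENNReal.ofReal (((1:ℝ) + ‖η‖)⁻¹)) := by ring
        _ = (12 : ℝ≥0∞) * Sconst * ENNReal.ofReal ((1 + ‖η‖) ^ 3 * F η ^ 2) := by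
            rw [hCid η]
    calc ∫⁻ η, ∫⁻ ξ, Q (ξ, η) ≤ ∫⁻ η : E3, (12 : ℝ≥0∞) * Sconst *
          ENNReal.ofReal ((1 + ‖η‖) ^ 3 * F η ^ 2) := lintegral_mono hinner
      _ = (12 : ℝ≥0∞) * Sconst * ∫⁻ η : E3, ENNReal.ofReal ((1 + ‖η‖) ^ 3 * F η ^ 2) :=
          lintegral_const_mul _ ((((measurable_const.add measurable_norm).pow_const 3).mul
            (hF.pow_const 2)).ennreal_ofReal)
      _ < ⊤ := ENNReal.mul_lt_top hconst_ne_top.lt_top hgfin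
  refine ⟨hmf.aestronglyMeasurable, ?_⟩
  rw [hasFiniteIntegral_iff_ofReal (ae_of_all _ hf0)]
  calc ∫⁻ q, ENNReal.ofReal (f q) ≤ ∫⁻ q, (P q + Q q) := lintegral_mono hpt
    _ = (∫⁻ q, P q) + ∫⁻ q, Q q := lintegral_add_left hmP _
    _ < ⊤ := ENNReal.add_lt_top.2 ⟨hPfin, hQfin⟩
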